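/- Convergence of the QNMF ADMM iteration for matrix completion (Theorem 3.3): let Y be an m×n quaternion matrix, Ω a set of index pairs (i,j), λ > 0, α > 0, β⁰ > 0, μ > 1, and set β^{(k)} = μ^k·β⁰. Suppose (X^{(k)}), (Z^{(k)}), (η^{(k)}) are sequences of m×n quaternion matrices such that for every k: (i) Z^{(k+1)}_{ij} = (Y − X^{(k)} + η^{(k)}/β^{(k)})_{ij} for (i,j) ∉ Ω and Z^{(k+1)}_{ij} = 0 for (i,j) ∈ Ω; (ii) there exist unitary quaternion matrices U^{(k)}, V^{(k)} and σ^{(k)} ∈ ℝ^M (M = min(m,n)) with σ^{(k)}₁ ≥ … ≥ σ^{(k)}_M ≥ 0 such that Y − Z^{(k+1)} + η^{(k)}/β^{(k)} = U^{(k)} * D(σ^{(k)}) * (V^{(k)})ᴴ and X^{(k+1)} = U^{(k)} * D(S_{λ/β^{(k)},α}(σ^{(k)})) * (V^{(k)})ᴴ; (iii) η^{(k+1)} = η^{(k)} + β^{(k)}·(Y − X^{(k+1)} − Z^{(k+1)}). Then ‖X^{(k+1)} − X^{(k)}‖_F → 0 and ‖Y − X^{(k+1)} − Z^{(k+1)}‖_F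 → 0 as k → ∞. -/

import Mathlib

open Matrix BigOperators Filter

noncomputable section

abbrev Quat := Quaternion ℝ

def IsQUnitary {k : ℕ} (U : Matrix (Fin k) (Fin k) Quat) : Prop :=
  Uᴴ * U = 1 ∧ U * Uᴴ = 1

def Dmat {m n : ℕ} (s : Fin (min m n) → ℝ) : Matrix (Fin m) (Fin n) Quat :=
  fun i j =>
    if h : (i : ℕ) = (j : ℕ) then
      ((s ⟨(i : ℕ), by have h1 := i.isLt; have h2 := j.isLt; omega⟩ : ℝ) : Quat)
    else 0

def frob {m n : ℕ} (A : Matrix (Fin m) (Fin n) Quat) : ℝ :=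
  Real.sqrt (∑ i, ∑ j, ‖A i j‖ ^ 2)

def Sshrink {M : ℕ} (lam alph : ℝ) (σ : Fin M → ℝ) : Fin M → ℝ :=
  let z : Fin M → ℝ := fun i => if lam < σ i then σ i - lam / 2 else 0
  let nz : ℝ := Real.sqrt (∑ i, z i ^ 2)
  if nz = 0 then fun _ => 0
  else
    let K : ℝ := 1 + alph * lam / (2 * nz)
    fun i =>
      if K * lam / (2 * (K - 1)) < σ i then σ i
      else if lam < σ i then K * (σ i - lam / 2)
      else 0

open Classical in
def softQ (t : ℝ) (q : Quat) : Quat :=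
  if q = 0 then 0 else (max (‖q‖ - t) 0 / ‖q‖) • q

def qinner {m n : ℕ} (P Q : Matrix (Fin m) (Fin n) Quat) : ℝ :=
  ∑ i, ∑ j, (star (P i j) * Q i j).re

/-!
After the update, the multiplier is `η⁽ᵏ⁺¹⁾ = β⁽ᵏ⁾ • U D(σ - S(σ)) Vᴴ` with the shrinkage threshold
`λ / β⁽ᵏ⁾`. The shrinkage moves every singular value by at most its threshold, so by unitary
invariance of the Frobenius norm `‖η⁽ᵏ⁺¹⁾‖ ≤ √m λ`: the multipliers stay bounded. Hence the residual
`Y - X⁽ᵏ⁺¹⁾ - Z⁽ᵏ⁺¹⁾ = (η⁽ᵏ⁺¹⁾ - η⁽ᵏ⁾) / β⁽ᵏ⁾` tends to `0`, since `β⁽ᵏ⁾ → ∞`. Finally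
`X⁽ᵏ⁺²⁾ - X⁽ᵏ⁺¹⁾ = (Y - X⁽ᵏ⁺¹⁾ - Z⁽ᵏ⁺²⁾) - (Y - X⁽ᵏ⁺²⁾ - Z⁽ᵏ⁺²⁾)`, and the first matrix agrees with
the previous residual on `Ω` and with `-η⁽ᵏ⁺¹⁾ / β⁽ᵏ⁺¹⁾` off `Ω`, so it tends to `0` as well.
-/

attribute [local instance] Matrix.frobeniusNormedAddCommGroup Matrix.frobeniusNormedSpace

open Topology

section Frobenius

variable {m n α : Type*} [Fintype m] [Fintype n] [NormedAddCommGroup α]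

theorem frobenius_norm_sq (A : Matrix m n α) : ‖A‖ ^ 2 = ∑ i, ∑ j, ‖A i j‖ ^ 2 := by
  rw [Matrix.frobenius_norm_def, ← Real.rpow_natCast, ← Real.rpow_mul (by positivity)]
  norm_num

theorem frobenius_norm_le_add_of_forall_eq_or_eq {A B C : Matrix m n α}
    (h : ∀ i j, A i j = B i j ∨ A i j = C i j) : ‖A‖ ≤ ‖B‖ + ‖C‖ := by
  have hsq : ‖A‖ ^ 2 ≤ ‖B‖ ^ 2 + ‖C‖ ^ 2 := by
    simp only [frobenius_norm_sq, ← Finset.sum_add_distrib]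
    gcongr with i _ j _
    rcases h i j with h | h <;> rw [h] <;> nlinarith [sq_nonneg ‖B i j‖, sq_nonneg ‖C i j‖]
  exact abs_le_of_sq_le_sq' (by nlinarith [norm_nonneg B, norm_nonneg C]) (by positivity) |>.2

end Frobenius

theorem Quaternion.re_sum {ι : Type*} (s : Finset ι) (f : ι → Quat) :
    (∑ x ∈ s, f x).re = ∑ x ∈ s, (f x).re :=
  map_sum (QuaternionAlgebra.reₗ _ _ _) f s

section QuaternionFrobenius

variable {l m n : Type*} [Fintype l] [Fintype m] [Fintype n]

theorem frobenius_norm_sq_eq_re_trace (A : Matrix m n Quat) :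
    ‖A‖ ^ 2 = (Aᴴ * A).trace.re := by
  rw [frobenius_norm_sq, Finset.sum_comm]
  simp only [Matrix.trace, Matrix.diag_apply, Matrix.mul_apply, Matrix.conjTranspose_apply,
    Quaternion.re_sum, Quaternion.star_mul_self, Quaternion.re_coe,
    Quaternion.normSq_eq_norm_mul_self, sq]

theorem frobenius_norm_mul_of_conjTranspose_mul_self [DecidableEq m] {U : Matrix l m Quat}
    (hU : Uᴴ * U = 1) (A : Matrix m n Quat) : ‖U * A‖ = ‖A‖ := by
  rw [← sq_eq_sq₀ (norm_nonneg _) (norm_nonneg _), frobenius_norm_sq_eq_re_trace,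
    frobenius_norm_sq_eq_re_trace, Matrix.conjTranspose_mul, Matrix.mul_assoc,
    ← Matrix.mul_assoc Uᴴ, hU, Matrix.one_mul]

theorem frobenius_norm_mul_conjTranspose_of_conjTranspose_mul_self [DecidableEq n]
    {V : Matrix l n Quat} (hV : Vᴴ * V = 1) (A : Matrix m n Quat) : ‖A * Vᴴ‖ = ‖A‖ := by
  rw [← Matrix.frobenius_norm_conjTranspose, Matrix.conjTranspose_mul,
    Matrix.conjTranspose_conjTranspose, frobenius_norm_mul_of_conjTranspose_mul_self hV,
    Matrix.frobenius_norm_conjTranspose]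

end QuaternionFrobenius

theorem frob_eq_norm {m n : ℕ} (A : Matrix (Fin m) (Fin n) Quat) : frob A = ‖A‖ := by
  rw [frob, ← frobenius_norm_sq, Real.sqrt_sq (norm_nonneg A)]

theorem Dmat_sub {m n : ℕ} (s t : Fin (min m n) → ℝ) :
    Dmat (m := m) (n := n) s - Dmat t = Dmat (s - t) := by
  funext i j
  simp only [Matrix.sub_apply, Dmat]
  split_ifs <;> simp

theorem norm_Dmat_le {m n : ℕ} {s : Fin (min m n) → ℝ} {c : ℝ} (hc : 0 ≤ c)
    (hs : ∀ i, |s i| ≤ c) : ‖(Dmat s : Matrix (Fin m) (Fin n) Quat)‖ ≤ √m * c := by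
  have hentry (i : Fin m) (j : Fin n) :
      ‖(Dmat s : Matrix (Fin m) (Fin n) Quat) i j‖ ^ 2 ≤ if (i : ℕ) = j then c ^ 2 else 0 := by
    unfold Dmat
    split_ifs
    · rw [Quaternion.norm_coe, Real.norm_eq_abs]
      exact pow_le_pow_left₀ (abs_nonneg _) (hs _) 2
    · simp
  have hrow (i : Fin m) : ∑ j : Fin n, (if (i : ℕ) = j then c ^ 2 else 0) ≤ c ^ 2 := by
    rw [Fin.sum_univ_eq_sum_range (fun k => if (i : ℕ) = k then c ^ 2 else 0), Finset.sum_ite_eq]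
    split_ifs
    exacts [le_rfl, sq_nonneg c]
  have hsq : ‖(Dmat s : Matrix (Fin m) (Fin n) Quat)‖ ^ 2 ≤ (√m * c) ^ 2 := by
    rw [frobenius_norm_sq, mul_pow, Real.sq_sqrt (Nat.cast_nonneg m)]
    calc _ ≤ ∑ _i : Fin m, c ^ 2 :=
          Finset.sum_le_sum fun i _ => (Finset.sum_le_sum fun j _ => hentry i j).trans (hrow i)
      _ = m * c ^ 2 := by simp
  exact abs_le_of_sq_le_sq' hsq (by positivity) |>.2

theorem abs_sub_mul_sub_half_le {K lam s : ℝ} (hK : 1 < K) (hlam : 0 ≤ lam) (hs : lam < s)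
    (hsK : s ≤ K * lam / (2 * (K - 1))) : |s - K * (s - lam / 2)| ≤ lam := by
  rw [le_div_iff₀ (by linarith)] at hsK
  rw [abs_le]
  constructor <;> nlinarith [mul_pos (sub_pos.mpr hK) (sub_pos.mpr hs)]

theorem abs_sub_Sshrink_le {M : ℕ} {lam alph : ℝ} (hlam : 0 < lam) (halph : 0 < alph)
    {σ : Fin M → ℝ} (hσ : ∀ i, 0 ≤ σ i) (i : Fin M) :
    |σ i - Sshrink lam alph σ i| ≤ lam := by
  unfold Sshrink
  dsimp only
  set z : Fin M → ℝ := fun j => if lam < σ j then σ j - lam / 2 else 0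
  set nz := √(∑ j, z j ^ 2)
  by_cases hz : nz = 0
  · rw [if_pos hz, sub_zero, abs_of_nonneg (hσ i)]
    -- a singular value above `lam` would make `z`, hence `nz`, nonzero
    by_contra! hσl
    have hzi : 0 < z i ^ 2 := by simp only [z, if_pos hσl]; nlinarith
    have : 0 < nz :=
      Real.sqrt_pos.mpr (hzi.trans_le (Finset.single_le_sum (fun j _ => sq_nonneg (z j))
        (Finset.mem_univ i)))
    exact this.ne' hz
  · have hK : 1 < 1 + alph * lam / (2 * nz) := by
      have : 0 < nz := (Real.sqrt_nonneg _).lt_of_ne' hz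
      simp only [lt_add_iff_pos_right]
      positivity
    rw [if_neg hz]
    split_ifs with hσK hσl
    · simpa using hlam.le
    · exact abs_sub_mul_sub_half_le hK hlam.le hσl (not_lt.mp hσK)
    · simpa [abs_of_nonneg (hσ i)] using hσl

section MultiplierUpdate

variable {E : Type*} [NormedAddCommGroup E] [NormedSpace ℝ E]

theorem tendsto_inv_smul_of_norm_le {β : ℕ → ℝ} {v : ℕ → E} {C : ℝ}
    (hβ : Tendsto β atTop atTop) (hv : ∀ k, ‖v k‖ ≤ C) :
    Tendsto (fun k => (β k)⁻¹ • v k) atTop (𝓝 0) :=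
  (tendsto_inv_atTop_zero.comp hβ).zero_smul_isBoundedUnder_le
    (isBoundedUnder_of ⟨C, fun k => hv k⟩)

theorem tendsto_residual_of_norm_multiplier_le {β : ℕ → ℝ} {η R : ℕ → E} {C : ℝ}
    (hβ : ∀ k, β k ≠ 0) (hβtop : Tendsto β atTop atTop) (hC : ∀ k, ‖η k‖ ≤ C)
    (hη : ∀ k, η (k + 1) = η k + β k • R k) : Tendsto R atTop (𝓝 0) := by
  have hR (k : ℕ) : R k = (β k)⁻¹ • (η (k + 1) - η k) := by
    rw [hη k, add_sub_cancel_left, inv_smul_smul₀ (hβ k)]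
  rw [funext hR]
  refine tendsto_inv_smul_of_norm_le hβtop (C := C + C) fun k => ?_
  exact (norm_sub_le _ _).trans (add_le_add (hC _) (hC _))

theorem multiplier_update_eq {β : ℝ} (hβ : β ≠ 0) (Y X Z η : E) :
    η + β • (Y - X - Z) = β • (Y - Z + β⁻¹ • η - X) := by
  simp only [smul_sub, smul_add, smul_inv_smul₀ hβ]
  abel

end MultiplierUpdate

section Completion

variable {m n α : Type*} [Fintype m] [Fintype n] [NormedAddCommGroup α]

theorem norm_sub_sub_le_of_masked_update {Ω : Set (m × n)} {Y X W Z Z' : Matrix m n α}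
    (hZ : ∀ i j, (i, j) ∈ Ω → Z i j = 0)
    (hZ' : ∀ i j, ((i, j) ∉ Ω → Z' i j = (Y - X + W) i j) ∧ ((i, j) ∈ Ω → Z' i j = 0)) :
    ‖Y - X - Z'‖ ≤ ‖Y - X - Z‖ + ‖W‖ := by
  rw [← norm_neg W]
  refine frobenius_norm_le_add_of_forall_eq_or_eq fun i j => ?_
  by_cases hij : (i, j) ∈ Ω
  · left
    simp [(hZ' i j).2 hij, hZ i j hij]
  · right
    simp [(hZ' i j).1 hij]

theorem norm_sub_le_of_masked_update {Ω : Set (m × n)} {Y X X' W Z Z' : Matrix m n α}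
    (hZ : ∀ i j, (i, j) ∈ Ω → Z i j = 0)
    (hZ' : ∀ i j, ((i, j) ∉ Ω → Z' i j = (Y - X + W) i j) ∧ ((i, j) ∈ Ω → Z' i j = 0)) :
    ‖X' - X‖ ≤ ‖Y - X - Z‖ + ‖W‖ + ‖Y - X' - Z'‖ :=
  calc ‖X' - X‖ = ‖(Y - X - Z') - (Y - X' - Z')‖ := by congr 1; abel
    _ ≤ ‖Y - X - Z'‖ + ‖Y - X' - Z'‖ := norm_sub_le _ _
    _ ≤ ‖Y - X - Z‖ + ‖W‖ + ‖Y - X' - Z'‖ := by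
      gcongr
      exact norm_sub_sub_le_of_masked_update hZ hZ'

end Completion

theorem norm_multiplier_update_le {m n : ℕ} {Y X Z η : Matrix (Fin m) (Fin n) Quat}
    {U : Matrix (Fin m) (Fin m) Quat} {V : Matrix (Fin n) (Fin n) Quat} {σ : Fin (min m n) → ℝ}
    {lam alph β : ℝ} (hlam : 0 < lam) (halph : 0 < alph) (hβ : 0 < β)
    (hU : Uᴴ * U = 1) (hV : Vᴴ * V = 1) (hσ : ∀ i, 0 ≤ σ i)
    (hsvd : Y - Z + β⁻¹ • η = U * Dmat σ * Vᴴ)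
    (hX : X = U * Dmat (Sshrink (lam / β) alph σ) * Vᴴ) :
    ‖η + β • (Y - X - Z)‖ ≤ √m * lam := by
  have hlamβ : 0 < lam / β := div_pos hlam hβ
  have hgap : ‖(Dmat (σ - Sshrink (lam / β) alph σ) : Matrix (Fin m) (Fin n) Quat)‖ ≤
      √m * (lam / β) :=
    norm_Dmat_le hlamβ.le fun i => abs_sub_Sshrink_le hlamβ halph hσ i
  rw [multiplier_update_eq hβ.ne', hsvd, hX, ← Matrix.sub_mul, ← Matrix.mul_sub, Dmat_sub,
    norm_smul, frobenius_norm_mul_conjTranspose_of_conjTranspose_mul_self hV,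
    frobenius_norm_mul_of_conjTranspose_mul_self hU, Real.norm_of_nonneg hβ.le]
  calc β * ‖(Dmat (σ - Sshrink (lam / β) alph σ) : Matrix (Fin m) (Fin n) Quat)‖
      ≤ β * (√m * (lam / β)) := by gcongr
    _ = √m * lam := by field_simp

theorem qnmf_admm_matrix_completion_convergence (m n : ℕ)
    (Y : Matrix (Fin m) (Fin n) Quat) (Ω : Set (Fin m × Fin n))
    (lam alph bet0 mu : ℝ)
    (hlam : 0 < lam) (halph : 0 < alph) (hbet0 : 0 < bet0) (hmu : 1 < mu)
    (bet : ℕ → ℝ) (hbet : ∀ k, bet k = mu ^ k * bet0)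
    (X Z η : ℕ → Matrix (Fin m) (Fin n) Quat)
    (hZ : ∀ k, ∀ i j,
        ((i, j) ∉ Ω → Z (k + 1) i j = (Y - X k + (bet k)⁻¹ • η k) i j) ∧
        ((i, j) ∈ Ω → Z (k + 1) i j = 0))
    (hX : ∀ k, ∃ (U : Matrix (Fin m) (Fin m) Quat) (V : Matrix (Fin n) (Fin n) Quat)
        (σ : Fin (min m n) → ℝ),
        IsQUnitary U ∧ IsQUnitary V ∧ Antitone σ ∧ (∀ i, 0 ≤ σ i) ∧
        Y - Z (k + 1) + (bet k)⁻¹ • η k = U * Dmat σ * Vᴴ ∧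
        X (k + 1) = U * Dmat (Sshrink (lam / bet k) alph σ) * Vᴴ)
    (hη : ∀ k, η (k + 1) = η k + bet k • (Y - X (k + 1) - Z (k + 1))) :
    Tendsto (fun k => frob (X (k + 1) - X k)) atTop (nhds 0) ∧
    Tendsto (fun k => frob (Y - X (k + 1) - Z (k + 1))) atTop (nhds 0) := by
  have hβ (k : ℕ) : 0 < bet k := hbet k ▸ by positivity
  have hβtop : Tendsto bet atTop atTop := by
    rw [funext hbet]
    exact (tendsto_pow_atTop_atTop_of_one_lt hmu).atTop_mul_const hbet0
  have hηsucc (k : ℕ) : ‖η (k + 1)‖ ≤ √m * lam := by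
    obtain ⟨U, V, σ, hU, hV, -, hσ, hsvd, hXk⟩ := hX k
    rw [hη k]
    exact norm_multiplier_update_le hlam halph (hβ k) hU.1 hV.1 hσ hsvd hXk
  obtain ⟨C, hC⟩ : ∃ C, ∀ k, ‖η k‖ ≤ C :=
    ⟨max (√m * lam) ‖η 0‖, fun
      | 0 => le_max_right _ _
      | k + 1 => (hηsucc k).trans (le_max_left _ _)⟩
  have hres : Tendsto (fun k => Y - X (k + 1) - Z (k + 1)) atTop (𝓝 0) :=
    tendsto_residual_of_norm_multiplier_le (fun k => (hβ k).ne') hβtop hC hη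
  have hdiff : Tendsto (fun k => ‖X (k + 1 + 1) - X (k + 1)‖) atTop (𝓝 0) := by
    refine squeeze_zero (fun k => norm_nonneg _)
      (fun k => norm_sub_le_of_masked_update (fun i j => (hZ k i j).2) (hZ (k + 1))) ?_
    have hshift := tendsto_add_atTop_nat 1
    simpa using (hres.norm.add ((tendsto_inv_smul_of_norm_le hβtop hC).norm.comp hshift)).add
      (hres.norm.comp hshift)
  simp only [frob_eq_norm]
  exact ⟨(tendsto_add_atTop_iff_nat 1).mp hdiff, tendsto_zero_iff_norm_tendsto_zero.mp hres⟩
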